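/- arXiv:2206.03589 — 4 statements merged into one kernel-verified Lean document; each statement's English description precedes it below -/
import Mathlib

section
/- Let E be a real inner product space with inner product ⟨·,·⟩_H, let y_1, …, y_M ∈ E be a finite family of snapshots, and let φ_1, …, φ_d ∈ E be POD modes for this family: the φ_i are orthonormal with respect to ⟨·,·⟩_H, every snapshot y_n lies in span{φ_1, …, φ_d}, and there exist nonnegative reals λ_1, …, λ_d (the POD eigenvalues) such that (1/M) Σ_{n=1}^M ⟨y_n, φ_i⟩_H ⟨y_n, φ_j⟩_H = λ_i δ_{ij} for all 1 ≤ i, j ≤ d. Let ⟨·,·⟩_W be a second inner product on E with associated norm ‖·‖_W, and let P_r : E → E be the map P_r v = Σ_{i=1}^r ⟨v, φ_i⟩_H φ_i for some 0 ≤ r ≤ d. Then (1/M) Σ_{n=1}^M ‖y_n − P_r y_n‖_W² = Σ_{i=r+1}^d λ_i ‖φ_i‖_W². -/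
open scoped InnerProductSpace

/-!
Expanding each snapshot in the POD modes, the residual `y n - P (y n)` is the tail
`∑_{i ≥ r} ⟪y n, φ i⟫ φ i`. Its squared `W`-norm is a double sum of products of
coefficients against the Gram entries `⟪φ i, φ j⟫_W`; averaging over the snapshots, the
diagonal correlation property replaces each product of coefficients by `λ_i δ_ij`.
-/

open Finset

def LinearMap.BilinForm.ofSymm {R M : Type*} [CommSemiring R] [AddCommMonoid M] [Module R M]
    (f : M → M → R) (hsymm : ∀ u v, f u v = f v u)
    (hadd : ∀ u v w, f (u + v) w = f u w + f v w) (hsmul : ∀ (c : R) u v, f (c • u) v = c * f u v) :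
    LinearMap.BilinForm R M :=
  LinearMap.mk₂ R f hadd hsmul
    (fun u v w => by rw [hsymm, hadd, hsymm v, hsymm w])
    (fun c u v => by rw [hsymm, hsmul, hsymm v, smul_eq_mul])

theorem LinearMap.BilinForm.apply_sum_smul_sum_smul {R M ι : Type*} [CommSemiring R]
    [AddCommMonoid M] [Module R M] (B : LinearMap.BilinForm R M) (s : Finset ι) (c : ι → R)
    (v : ι → M) :
    B (∑ i ∈ s, c i • v i) (∑ j ∈ s, c j • v j) = ∑ i ∈ s, ∑ j ∈ s, c i * c j * B (v i) (v j) := by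
  simp only [map_sum, map_smul, LinearMap.sum_apply, LinearMap.smul_apply, smul_eq_mul, mul_sum]
  rw [sum_comm]
  exact sum_congr rfl fun i _ => sum_congr rfl fun j _ => by ring

theorem Orthonormal.sum_inner_smul_eq_of_mem_span {𝕜 E ι : Type*} [RCLike 𝕜]
    [NormedAddCommGroup E] [InnerProductSpace 𝕜 E] [Fintype ι] {v : ι → E}
    (hv : Orthonormal 𝕜 v) {x : E} (hx : x ∈ Submodule.span 𝕜 (Set.range v)) :
    ∑ i, ⟪v i, x⟫_𝕜 • v i = x := by
  obtain ⟨l, rfl⟩ := (Submodule.mem_span_range_iff_exists_fun 𝕜).1 hx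
  simp only [hv.inner_right_fintype]

theorem sub_sum_filter_eq_sum_filter_not {ι M : Type*} [Fintype ι] [AddCommGroup M]
    (p : ι → Prop) [DecidablePred p] (f : ι → M) :
    ∑ i, f i - ∑ i with p i, f i = ∑ i with ¬p i, f i := by
  rw [← sum_filter_add_sum_filter_not univ p f, add_sub_cancel_left]

theorem mul_sum_quadratic_of_correlation_diagonal {ι N R : Type*} [Fintype N] [DecidableEq ι]
    [CommSemiring R] (w : R) (c : N → ι → R) (lam : ι → R)
    (hcorr : ∀ i j, w * ∑ n, c n i * c n j = if i = j then lam i else 0)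
    (s : Finset ι) (g : ι → ι → R) :
    w * ∑ n, ∑ i ∈ s, ∑ j ∈ s, c n i * c n j * g i j = ∑ i ∈ s, lam i * g i i := by
  calc w * ∑ n, ∑ i ∈ s, ∑ j ∈ s, c n i * c n j * g i j
      = ∑ i ∈ s, ∑ j ∈ s, (w * ∑ n, c n i * c n j) * g i j := by
        rw [sum_comm, mul_sum]
        refine sum_congr rfl fun i _ => ?_
        rw [sum_comm, mul_sum]
        refine sum_congr rfl fun j _ => ?_
        rw [← sum_mul, mul_assoc]
    _ = ∑ i ∈ s, lam i * g i i := by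
        simp only [hcorr, ite_mul, zero_mul, sum_ite_eq]
        exact sum_congr rfl fun i hi => if_pos hi

theorem pod_projection_error_W_norm_general
    {E : Type*} [NormedAddCommGroup E] [InnerProductSpace ℝ E]
    (M d : ℕ)
    (y : Fin M → E) (φ : Fin d → E) (lam : Fin d → ℝ)
    (hortho : Orthonormal ℝ φ)
    (hspan : ∀ n, y n ∈ Submodule.span ℝ (Set.range φ))
    (hcorr : ∀ i j : Fin d,
      (1 / (M : ℝ)) * ∑ n, ⟪y n, φ i⟫_ℝ * ⟪y n, φ j⟫_ℝ
        = if i = j then lam i else 0)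
    (innerW : E → E → ℝ)
    (hW_symm : ∀ u v, innerW u v = innerW v u)
    (hW_add : ∀ u v w, innerW (u + v) w = innerW u w + innerW v w)
    (hW_smul : ∀ (c : ℝ) (u v : E), innerW (c • u) v = c * innerW u v)
    (r : ℕ)
    (P : E → E)
    (hP : ∀ v, P v = ∑ i ∈ Finset.univ.filter (fun i : Fin d => (i : ℕ) < r),
      ⟪v, φ i⟫_ℝ • φ i) :
    (1 / (M : ℝ)) * ∑ n, innerW (y n - P (y n)) (y n - P (y n))
      = ∑ i ∈ Finset.univ.filter (fun i : Fin d => r ≤ (i : ℕ)),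
          lam i * innerW (φ i) (φ i) := by
  set B := LinearMap.BilinForm.ofSymm innerW hW_symm hW_add hW_smul
  set tail := univ.filter (fun i : Fin d => r ≤ (i : ℕ))
  have hresidual : ∀ n, y n - P (y n) = ∑ i ∈ tail, ⟪y n, φ i⟫_ℝ • φ i := by
    intro n
    have hexpansion : ∑ i, ⟪y n, φ i⟫_ℝ • φ i = y n := by
      simpa only [real_inner_comm (y n)] using hortho.sum_inner_smul_eq_of_mem_span (hspan n)
    rw [hP]
    nth_rw 1 [← hexpansion]
    simp only [tail, sub_sum_filter_eq_sum_filter_not, not_lt]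
  have hquadratic : ∀ n, innerW (y n - P (y n)) (y n - P (y n))
      = ∑ i ∈ tail, ∑ j ∈ tail, ⟪y n, φ i⟫_ℝ * ⟪y n, φ j⟫_ℝ * B (φ i) (φ j) := fun n => by
    rw [hresidual, ← B.apply_sum_smul_sum_smul]
    rfl
  simp only [hquadratic]
  exact mul_sum_quadratic_of_correlation_diagonal _ _ lam hcorr _ _

/-- Identity (2.1a) of Lemma 2.1: the mean-square POD projection error in a second
inner product `W` equals the tail sum of POD eigenvalues weighted by the `W`-norms
of the POD modes. -/
theorem pod_projection_error_W_norm
    {E : Type*} [NormedAddCommGroup E] [InnerProductSpace ℝ E]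
    (M d : ℕ) (hM : 0 < M)
    (y : Fin M → E) (φ : Fin d → E) (lam : Fin d → ℝ)
    (hortho : Orthonormal ℝ φ)
    (hspan : ∀ n, y n ∈ Submodule.span ℝ (Set.range φ))
    (hlam_nonneg : ∀ i, 0 ≤ lam i)
    (hcorr : ∀ i j : Fin d,
      (1 / (M : ℝ)) * ∑ n, ⟪y n, φ i⟫_ℝ * ⟪y n, φ j⟫_ℝ
        = if i = j then lam i else 0)
    (innerW : E → E → ℝ)
    (hW_symm : ∀ u v, innerW u v = innerW v u)
    (hW_add : ∀ u v w, innerW (u + v) w = innerW u w + innerW v w)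
    (hW_smul : ∀ (c : ℝ) (u v : E), innerW (c • u) v = c * innerW u v)
    (hW_pos : ∀ u : E, u ≠ 0 → 0 < innerW u u)
    (r : ℕ) (hr : r ≤ d)
    (P : E → E)
    (hP : ∀ v, P v = ∑ i ∈ Finset.univ.filter (fun i : Fin d => (i : ℕ) < r),
      ⟪v, φ i⟫_ℝ • φ i) :
    (1 / (M : ℝ)) * ∑ n, innerW (y n - P (y n)) (y n - P (y n))
      = ∑ i ∈ Finset.univ.filter (fun i : Fin d => r ≤ (i : ℕ)),
          lam i * innerW (φ i) (φ i) :=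
  pod_projection_error_W_norm_general M d y φ lam hortho hspan hcorr innerW hW_symm hW_add hW_smul r
    P hP
end

section
/- Let E be a real inner product space with inner product ⟨·,·⟩_H and norm ‖·‖_H. Fix T > 0, an integer N ≥ 1, set Δt = T/N, and let u^0, u^1, …, u^N ∈ E. Define the difference quotients ∂u^n := (u^n − u^{n−1})/Δt for 1 ≤ n ≤ N, and let the DQ snapshot family be the M = 2N+1 vectors {u^n}_{n=0}^N ∪ {∂u^n}_{n=1}^N. Assume φ_1, …, φ_d ∈ E are POD modes for this family: the φ_i are ⟨·,·⟩_H-orthonormal, every vector of the family lies in span{φ_1, …, φ_d}, and there exist nonnegative reals λ_1^DQ, …, λ_d^DQ such that (1/(2N+1)) Σ over the family of ⟨y, φ_i⟩_H ⟨y, φ_j⟩_H equals λ_i^DQ δ_{ij} for all i, j. Let P_r v = Σ_{i=1}^r ⟨v, φ_i⟩_H φ_i for some 0 ≤ r ≤ d. Then max_{0 ≤ k ≤ N} ‖u^k − P_r u^k‖_H² ≤ C Σ_{i=r+1}^d λ_i^DQ, where C = 6 max{1, T²}. -/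
open scoped InnerProductSpace

lemma dq_expand {E : Type*} [NormedAddCommGroup E] [InnerProductSpace ℝ E]
    {d : ℕ} {φ : Fin d → E} (h : Orthonormal ℝ φ) {v : E}
    (hv : v ∈ Submodule.span ℝ (Set.range φ)) :
    v = ∑ i, ⟪v, φ i⟫_ℝ • φ i := by
  obtain ⟨c, hc⟩ := (Submodule.mem_span_range_iff_exists_fun ℝ).1 hv
  have key : ∀ i, ⟪v, φ i⟫_ℝ = c i := by
    intro i
    rw [← hc, sum_inner]
    simp_rw [real_inner_smul_left, orthonormal_iff_ite.1 h]
    simp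
  simp_rw [key]
  exact hc.symm

lemma dq_norm_sq_sum {E : Type*} [NormedAddCommGroup E] [InnerProductSpace ℝ E]
    {d : ℕ} {φ : Fin d → E} (h : Orthonormal ℝ φ) (t : Finset (Fin d)) (a : Fin d → ℝ) :
    ‖∑ i ∈ t, a i • φ i‖ ^ 2 = ∑ i ∈ t, (a i) ^ 2 := by
  rw [← real_inner_self_eq_norm_sq]
  rw [sum_inner]
  simp_rw [inner_sum, real_inner_smul_left, real_inner_smul_right, orthonormal_iff_ite.1 h]
  simp [Finset.mul_sum, Finset.sum_ite_eq, sq]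

lemma dq_arith (Nr T M x A B : ℝ) (hN1 : 1 ≤ Nr) (hM1 : 1 ≤ M) (hMT : T ^ 2 ≤ M)
    (hA0 : 0 ≤ A) (hB0 : 0 ≤ B)
    (he1 : Nr * (Nr + 1) * x ^ 2 ≤ 2 * Nr * A + 2 * (Nr + 1) * T ^ 2 * B) :
    x ^ 2 * (2 * Nr + 1) ≤ 6 * M * (A + B) := by
  have hN0 : (0:ℝ) < Nr := by linarith
  have h2N1 : (0:ℝ) < 2 * Nr + 1 := by linarith
  have coefA : 2 * Nr * (2 * Nr + 1) ≤ 6 * M * Nr * (Nr + 1) := by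
    nlinarith [mul_nonneg (mul_nonneg (sub_nonneg.2 hM1) hN0.le) hN0.le,
      mul_nonneg (sub_nonneg.2 hM1) hN0.le, sq_nonneg Nr, hN0.le]
  have hNsq : (1:ℝ) ≤ Nr ^ 2 := by nlinarith
  have coefB : 2 * (Nr + 1) * (2 * Nr + 1) * T ^ 2 ≤ 6 * M * Nr * (Nr + 1) := by
    nlinarith [mul_nonneg (mul_nonneg (sub_nonneg.2 hMT) hN0.le) hN0.le,
      mul_nonneg (sub_nonneg.2 hMT) hN0.le,
      mul_nonneg (sq_nonneg T) (sub_nonneg.2 hNsq)]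
  have scaled : (2 * Nr + 1) * (Nr * (Nr + 1) * x ^ 2) ≤ 6 * M * Nr * (Nr + 1) * (A + B) := by
    calc (2 * Nr + 1) * (Nr * (Nr + 1) * x ^ 2)
        ≤ (2 * Nr + 1) * (2 * Nr * A + 2 * (Nr + 1) * T ^ 2 * B) :=
          mul_le_mul_of_nonneg_left he1 h2N1.le
      _ = (2 * Nr * (2 * Nr + 1)) * A + (2 * (Nr + 1) * (2 * Nr + 1) * T ^ 2) * B := by ring
      _ ≤ (6 * M * Nr * (Nr + 1)) * A + (6 * M * Nr * (Nr + 1)) * B :=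
          add_le_add (mul_le_mul_of_nonneg_right coefA hA0)
            (mul_le_mul_of_nonneg_right coefB hB0)
      _ = 6 * M * Nr * (Nr + 1) * (A + B) := by ring
  have scaled' : (Nr * (Nr + 1)) * (x ^ 2 * (2 * Nr + 1))
      ≤ (Nr * (Nr + 1)) * (6 * M * (A + B)) := by linarith [scaled]
  exact le_of_mul_le_mul_left scaled' (by positivity)

/-- Bound (a) of Theorem 2.2: uniform-in-time DQ POD projection error bound
in the `H` norm, `max_k ‖u^k − P_r u^k‖_H² ≤ 6 max{1, T²} Σ_{i>r} λ_i^DQ`. -/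
theorem dq_pod_uniform_bound_H
    {E : Type*} [NormedAddCommGroup E] [InnerProductSpace ℝ E]
    (T : ℝ) (hT : 0 < T) (N : ℕ) (hN : 1 ≤ N)
    (Δt : ℝ) (hΔt : Δt = T / N)
    (u : Fin (N + 1) → E) (du : Fin N → E)
    (hdu : ∀ n : Fin N, du n = (Δt)⁻¹ • (u n.succ - u n.castSucc))
    (d : ℕ) (φ : Fin d → E) (lam : Fin d → ℝ)
    (hortho : Orthonormal ℝ φ)
    (hspan_u : ∀ k, u k ∈ Submodule.span ℝ (Set.range φ))
    (hspan_du : ∀ n, du n ∈ Submodule.span ℝ (Set.range φ))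
    (hlam_nonneg : ∀ i, 0 ≤ lam i)
    (hcorr : ∀ i j : Fin d,
      (1 / (2 * (N : ℝ) + 1)) *
        ((∑ k : Fin (N + 1), ⟪u k, φ i⟫_ℝ * ⟪u k, φ j⟫_ℝ) +
          ∑ n : Fin N, ⟪du n, φ i⟫_ℝ * ⟪du n, φ j⟫_ℝ)
        = if i = j then lam i else 0)
    (r : ℕ) (hr : r ≤ d)
    (P : E → E)
    (hP : ∀ v, P v = ∑ i ∈ Finset.univ.filter (fun i : Fin d => (i : ℕ) < r),
      ⟪v, φ i⟫_ℝ • φ i) :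
    ∀ k : Fin (N + 1),
      ‖u k - P (u k)‖ ^ 2 ≤ 6 * max 1 (T ^ 2) *
        ∑ i ∈ Finset.univ.filter (fun i : Fin d => r ≤ (i : ℕ)), lam i := by
  have hNpos : (0:ℝ) < N := by exact_mod_cast Nat.lt_of_lt_of_le Nat.zero_lt_one hN
  have hN1 : (1:ℝ) ≤ N := by exact_mod_cast hN
  have hΔtpos : 0 < Δt := by rw [hΔt]; positivity
  set M := max 1 (T ^ 2) with hMdef
  have hM1 : (1:ℝ) ≤ M := le_max_left _ _
  have hMT : T ^ 2 ≤ M := le_max_right _ _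
  have h2N1 : (0:ℝ) < 2 * N + 1 := by positivity
  -- pointwise bound
  have key : ∀ (i : Fin d) (k : Fin (N + 1)), ⟪u k, φ i⟫_ℝ ^ 2 ≤ 6 * M * lam i := by
    intro i k
    set A := ∑ m : Fin (N + 1), ⟪u m, φ i⟫_ℝ ^ 2 with hA
    set B := ∑ n : Fin N, ⟪du n, φ i⟫_ℝ ^ 2 with hB
    have hA0 : 0 ≤ A := Finset.sum_nonneg fun _ _ => sq_nonneg _
    have hB0 : 0 ≤ B := Finset.sum_nonneg fun _ _ => sq_nonneg _
    have hlam : lam i = (1 / (2 * (N:ℝ) + 1)) * (A + B) := by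
      have h := hcorr i i
      rw [if_pos rfl] at h
      rw [hA, hB]
      simp_rw [sq]
      linarith [h]
    -- extended sequences
    set ua : ℕ → ℝ := fun j => ⟪u ⟨min j N, by omega⟩, φ i⟫_ℝ with hua_def
    set bb : ℕ → ℝ := fun n => if h : n < N then ⟪du ⟨n, h⟩, φ i⟫_ℝ else 0 with hbb_def
    have hua : ∀ m : Fin (N + 1), ua ↑m = ⟪u m, φ i⟫_ℝ := by
      intro m
      have : (⟨min (↑m) N, by omega⟩ : Fin (N + 1)) = m := by
        apply Fin.ext
        simp [Nat.min_eq_left (Nat.lt_succ_iff.1 m.isLt)]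
      simp only [hua_def, this]
    have hstep : ∀ n, n < N → ua (n + 1) = ua n + Δt * bb n := by
      intro n h
      have h2 : u (Fin.succ ⟨n, h⟩) - u (Fin.castSucc ⟨n, h⟩) = Δt • du ⟨n, h⟩ := by
        rw [hdu ⟨n, h⟩, smul_smul, mul_inv_cancel₀ (ne_of_gt hΔtpos), one_smul]
      have h3 : ⟪u (Fin.succ ⟨n, h⟩), φ i⟫_ℝ - ⟪u (Fin.castSucc ⟨n, h⟩), φ i⟫_ℝ
          = Δt * ⟪du ⟨n, h⟩, φ i⟫_ℝ := by
        rw [← inner_sub_left, h2, real_inner_smul_left]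
      have e1 : ua (n + 1) = ⟪u (Fin.succ ⟨n, h⟩), φ i⟫_ℝ := by
        simp only [hua_def]
        congr 1
        apply congrArg u
        apply Fin.ext
        simp [Fin.val_succ]
        omega
      have e2 : ua n = ⟪u (Fin.castSucc ⟨n, h⟩), φ i⟫_ℝ := by
        simp only [hua_def]
        congr 1
        apply congrArg u
        apply Fin.ext
        simp
        omega
      have e3 : bb n = ⟪du ⟨n, h⟩, φ i⟫_ℝ := by simp only [hbb_def, dif_pos h]
      rw [e1, e2, e3]
      linarith [h3]
    have htel : ∀ p q, p ≤ q → q ≤ N → ua q - ua p = Δt * ∑ n ∈ Finset.Ico p q, bb n := by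
      intro p q hpq hqN
      induction q, hpq using Nat.le_induction with
      | base => simp
      | succ q hq ih =>
        have h4 := ih (by omega)
        have h5 := hstep q (by omega)
        rw [Finset.sum_Ico_succ_top hq, mul_add]
        linarith
    have hBb : B = ∑ n ∈ Finset.range N, (bb n) ^ 2 := by
      rw [hB, ← Fin.sum_univ_eq_sum_range (fun n => (bb n) ^ 2) N]
      apply Finset.sum_congr rfl
      intro n _
      congr 1
      simp only [hbb_def]
      rw [dif_pos n.isLt]
    have hdiff : ∀ p q, p ≤ N → q ≤ N → (ua q - ua p) ^ 2 ≤ Δt ^ 2 * N * B := by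
      have main : ∀ p q, p ≤ q → q ≤ N → (ua q - ua p) ^ 2 ≤ Δt ^ 2 * N * B := by
        intro p q hpq hqN
        rw [htel p q hpq hqN, mul_pow]
        have cs : (∑ n ∈ Finset.Ico p q, bb n) ^ 2
            ≤ ((Finset.Ico p q).card : ℝ) * ∑ n ∈ Finset.Ico p q, (bb n) ^ 2 :=
          sq_sum_le_card_mul_sum_sq
        have hcard : ((Finset.Ico p q).card : ℝ) ≤ N := by
          rw [Nat.card_Ico]
          exact_mod_cast Nat.le_trans (Nat.sub_le q p) hqN
        have hsub : ∑ n ∈ Finset.Ico p q, (bb n) ^ 2 ≤ ∑ n ∈ Finset.range N, (bb n) ^ 2 :=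
          Finset.sum_le_sum_of_subset_of_nonneg
            (by intro x hx; simp only [Finset.mem_Ico] at hx; simp only [Finset.mem_range]; omega)
            (fun _ _ _ => sq_nonneg _)
        have h0 : (0:ℝ) ≤ ∑ n ∈ Finset.Ico p q, (bb n) ^ 2 :=
          Finset.sum_nonneg fun _ _ => sq_nonneg _
        rw [hBb]
        calc Δt ^ 2 * (∑ n ∈ Finset.Ico p q, bb n) ^ 2
            ≤ Δt ^ 2 * (((Finset.Ico p q).card : ℝ) * ∑ n ∈ Finset.Ico p q, (bb n) ^ 2) :=
              mul_le_mul_of_nonneg_left cs (sq_nonneg _)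
          _ ≤ Δt ^ 2 * ((N : ℝ) * ∑ n ∈ Finset.range N, (bb n) ^ 2) := by
              apply mul_le_mul_of_nonneg_left _ (sq_nonneg _)
              exact mul_le_mul hcard hsub h0 (le_of_lt hNpos)
          _ = Δt ^ 2 * N * ∑ n ∈ Finset.range N, (bb n) ^ 2 := by ring
      intro p q hp hq
      rcases le_total p q with h | h
      · exact main p q h hq
      · have := main q p h hp
        calc (ua q - ua p) ^ 2 = (ua p - ua q) ^ 2 := by ring
          _ ≤ _ := this
    have hm : ∀ m : Fin (N + 1),
        ⟪u k, φ i⟫_ℝ ^ 2 ≤ 2 * ⟪u m, φ i⟫_ℝ ^ 2 + 2 * (Δt ^ 2 * N * B) := by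
      intro m
      have hd := hdiff ↑m ↑k (Nat.lt_succ_iff.1 m.isLt) (Nat.lt_succ_iff.1 k.isLt)
      rw [hua m, hua k] at hd
      nlinarith [sq_nonneg (⟪u k, φ i⟫_ℝ - 2 * ⟪u m, φ i⟫_ℝ)]
    have hsum : ((N:ℝ) + 1) * ⟪u k, φ i⟫_ℝ ^ 2 ≤ 2 * A + ((N:ℝ) + 1) * (2 * (Δt ^ 2 * N * B)) := by
      calc ((N:ℝ) + 1) * ⟪u k, φ i⟫_ℝ ^ 2 = ∑ _m : Fin (N + 1), ⟪u k, φ i⟫_ℝ ^ 2 := by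
            rw [Finset.sum_const, Finset.card_univ, Fintype.card_fin]
            push_cast
            ring
        _ ≤ ∑ m : Fin (N + 1), (2 * ⟪u m, φ i⟫_ℝ ^ 2 + 2 * (Δt ^ 2 * N * B)) :=
            Finset.sum_le_sum fun m _ => hm m
        _ = 2 * A + ((N:ℝ) + 1) * (2 * (Δt ^ 2 * N * B)) := by
            rw [Finset.sum_add_distrib, ← Finset.mul_sum, ← hA, Finset.sum_const,
              Finset.card_univ, Fintype.card_fin]
            push_cast
            ring
    -- arithmetic
    have f2 : Δt ^ 2 * (N:ℝ) * N = T ^ 2 := by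
      rw [hΔt]
      field_simp
    have e1 : (N:ℝ) * ((N:ℝ) + 1) * ⟪u k, φ i⟫_ℝ ^ 2 ≤ 2 * N * A + 2 * ((N:ℝ) + 1) * T ^ 2 * B := by
      have h6 := mul_le_mul_of_nonneg_left hsum (le_of_lt hNpos)
      have f2' : (N:ℝ) * (((N:ℝ) + 1) * (2 * (Δt ^ 2 * N * B))) = 2 * ((N:ℝ) + 1) * T ^ 2 * B := by
        rw [← f2]; ring
      nlinarith [h6, f2']
    have hfin : ⟪u k, φ i⟫_ℝ ^ 2 * (2 * (N:ℝ) + 1) ≤ 6 * M * (A + B) :=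
      dq_arith (N:ℝ) T M _ A B hN1 hM1 hMT hA0 hB0 e1
    have heq : 6 * M * lam i = 6 * M * (A + B) / (2 * (N:ℝ) + 1) := by
      rw [hlam]; ring
    rw [heq, le_div_iff₀ h2N1]
    exact hfin
  -- conclude
  intro k
  have hfeq : Finset.univ.filter (fun i : Fin d => ¬ (i : ℕ) < r)
      = Finset.univ.filter (fun i : Fin d => r ≤ (i : ℕ)) := by
    ext i
    simp only [Finset.mem_filter, Finset.mem_univ, true_and, not_lt]
  have hsplit : u k - P (u k)
      = ∑ i ∈ Finset.univ.filter (fun i : Fin d => r ≤ (i : ℕ)), ⟪u k, φ i⟫_ℝ • φ i := by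
    have hexp := dq_expand hortho (hspan_u k)
    obtain ⟨c, hc⟩ : ∃ c : Fin d → ℝ, ∀ i, ⟪u k, φ i⟫_ℝ = c i := ⟨_, fun _ => rfl⟩
    rw [hP]
    simp_rw [hc] at hexp ⊢
    rw [hexp, ← Finset.sum_filter_add_sum_filter_not Finset.univ
      (fun i : Fin d => (i : ℕ) < r) (fun i => c i • φ i), hfeq]
    abel
  rw [hsplit, dq_norm_sq_sum hortho]
  calc ∑ i ∈ Finset.univ.filter (fun i : Fin d => r ≤ (i : ℕ)), ⟪u k, φ i⟫_ℝ ^ 2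
      ≤ ∑ i ∈ Finset.univ.filter (fun i : Fin d => r ≤ (i : ℕ)), 6 * M * lam i :=
        Finset.sum_le_sum fun i _ => key i k
    _ = 6 * M * ∑ i ∈ Finset.univ.filter (fun i : Fin d => r ≤ (i : ℕ)), lam i := by
        rw [Finset.mul_sum]
end

section
/- Let E be a real inner product space with inner product ⟨·,·⟩_H. Fix T > 0, an integer N ≥ 1, set Δt = T/N, and let u^0, u^1, …, u^N ∈ E with difference quotients ∂u^n := (u^n − u^{n−1})/Δt for 1 ≤ n ≤ N; let the DQ snapshot family be the M = 2N+1 vectors {u^n}_{n=0}^N ∪ {∂u^n}_{n=1}^N. Assume φ_1, …, φ_d ∈ E are POD modes for this family: the φ_i are ⟨·,·⟩_H-orthonormal, every vector of the family lies in span{φ_1, …, φ_d}, and there exist nonnegative reals λ_1^DQ, …, λ_d^DQ with (1/(2N+1)) Σ over the family of ⟨y, φ_i⟩_H ⟨y, φ_j⟩_H = λ_i^DQ δ_{ij}. Let ⟨·,·⟩_W be a second inner product on E with norm ‖·‖_W, and let P_r v = Σ_{i=1}^r ⟨v, φ_i⟩_H φ_i for some 0 ≤ r ≤ d. Then max_{0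 ≤ k ≤ N} ‖u^k − P_r u^k‖_W² ≤ C Σ_{i=r+1}^d λ_i^DQ ‖φ_i‖_W², where C = 6 max{1, T²}. -/
/-!
Write `Q_r v = Σ_{i>r} ⟪v, φ_i⟫ φ_i`. Since `u^j` lies in the span of the modes,
`u^j - P_r u^j = e_j := Q_r u^j`; put `δ_n := Q_r ∂u^n`, so that linearity of `Q_r` gives
`e_{n+1} = e_n + Δt δ_n`. Averaging `e_k = e_j + (e_k - e_j)` over `j` and using
`B(Σ_{i∈s} v_i, Σ_{i∈s} v_i) ≤ |s| Σ_{i∈s} B(v_i, v_i)`, true for every bilinear form with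
`B(x, x) ≥ 0`, gives `‖e_k‖_W² ≤ 2/(N+1) Σ_j ‖e_j‖_W² + 2Δt²N Σ_n ‖δ_n‖_W²`. Because the modes
diagonalise the correlation of the snapshot family,
`Σ_j ‖e_j‖_W² + Σ_n ‖δ_n‖_W² = (2N+1) Σ_{i>r} λ_i ‖φ_i‖_W²`, and both weights are at most
`6 max{1, T²}/(2N+1)`.
-/

open scoped InnerProductSpace
open Finset

theorem Fin.eq_add_smul_sum_of_forall_succ_eq {R M : Type*} [Ring R] [AddCommGroup M] [Module R M]
    {N : ℕ} {x : Fin (N + 1) → M} {y : Fin N → M} {h : R}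
    (hstep : ∀ n, x n.succ = x n.castSucc + h • y n) (m : Fin (N + 1)) :
    x m = x 0 + h • ∑ n, (if n.castSucc < m then (1 : R) else 0) • y n := by
  induction m using Fin.induction with
  | zero => simp
  | succ i ih =>
    have hind : ∀ n : Fin N, (if n.castSucc < i.succ then (1 : R) else 0) =
        (if n.castSucc < i.castSucc then 1 else 0) + if n = i then 1 else 0 := by
      intro n
      simp only [Fin.lt_def, Fin.val_castSucc, Fin.val_succ, Fin.ext_iff]
      split_ifs <;> first | omega | norm_num
    simp only [hind, add_smul, sum_add_distrib, ite_smul, one_smul, zero_smul, sum_ite_eq',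
      mem_univ, if_true, smul_add, hstep i, ih, add_assoc]

namespace LinearMap.BilinForm

section

variable {R M : Type*} [CommSemiring R] [AddCommMonoid M] [Module R M] (f : M → M → R)
  (hsymm : ∀ x y, f x y = f y x) (hadd : ∀ x y z, f (x + y) z = f x z + f y z)
  (hsmul : ∀ (c : R) x y, f (c • x) y = c * f x y)

def mkOfSymm : LinearMap.BilinForm R M :=
  LinearMap.mk₂ R f hadd (fun c x y => by rw [hsmul, smul_eq_mul])
    (fun x y z => by rw [hsymm, hadd, hsymm y, hsymm z])
    (fun c x y => by rw [hsymm, hsmul, hsymm, smul_eq_mul])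

@[simp]
theorem mkOfSymm_apply (x y : M) : mkOfSymm f hsymm hadd hsmul x y = f x y :=
  rfl

theorem isNonneg_mkOfSymm [Preorder R] (hpos : ∀ x, x ≠ 0 → 0 < f x x) :
    (mkOfSymm f hsymm hadd hsmul).IsNonneg := by
  refine ⟨fun x => ?_⟩
  rcases eq_or_ne x 0 with rfl | hx
  · simp
  · exact (hpos x hx).le

end

variable {E : Type*} [AddCommGroup E] [Module ℝ E] {B : LinearMap.BilinForm ℝ E}

theorem apply_smul_smul_self (c : ℝ) (x : E) : B (c • x) (c • x) = c ^ 2 * B x x := by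
  simp only [map_smul, LinearMap.smul_apply, smul_eq_mul]
  ring

theorem IsNonneg.apply_add_apply_swap_le (hB : B.IsNonneg) (x y : E) :
    B x y + B y x ≤ B x x + B y y := by
  have := hB.nonneg (x - y)
  simp only [map_sub, LinearMap.sub_apply] at this
  linarith

theorem IsNonneg.apply_add_self_le (hB : B.IsNonneg) (x y : E) :
    B (x + y) (x + y) ≤ 2 * B x x + 2 * B y y := by
  have := hB.apply_add_apply_swap_le x y
  simp only [map_add, LinearMap.add_apply]
  linarith

theorem IsNonneg.apply_sum_self_le (hB : B.IsNonneg) {ι : Type*} (s : Finset ι) (v : ι → E) :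
    B (∑ i ∈ s, v i) (∑ i ∈ s, v i) ≤ #s * ∑ i ∈ s, B (v i) (v i) := by
  have hsymm : 2 * B (∑ i ∈ s, v i) (∑ i ∈ s, v i) =
      ∑ i ∈ s, ∑ j ∈ s, (B (v i) (v j) + B (v j) (v i)) := by
    simp only [map_sum, LinearMap.sum_apply, sum_add_distrib]
    rw [sum_comm (f := fun i j => B (v j) (v i))]
    ring
  have hdiag : ∑ i ∈ s, ∑ j ∈ s, (B (v i) (v i) + B (v j) (v j)) =
      2 * (#s * ∑ i ∈ s, B (v i) (v i)) := by
    simp only [sum_add_distrib, sum_const, nsmul_eq_mul, ← mul_sum]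
    ring
  have := sum_le_sum fun i (_ : i ∈ s) => sum_le_sum fun j (_ : j ∈ s) =>
    hB.apply_add_apply_swap_le (v i) (v j)
  linarith

theorem IsNonneg.apply_sum_smul_self_le (hB : B.IsNonneg) {ι : Type*} (s : Finset ι) (c : ι → ℝ)
    (hc : ∀ i ∈ s, |c i| ≤ 1) (v : ι → E) :
    B (∑ i ∈ s, c i • v i) (∑ i ∈ s, c i • v i) ≤ #s * ∑ i ∈ s, B (v i) (v i) := by
  refine (hB.apply_sum_self_le s _).trans (mul_le_mul_of_nonneg_left (sum_le_sum fun i hi => ?_)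
    (Nat.cast_nonneg _))
  rw [apply_smul_smul_self]
  exact mul_le_of_le_one_left (hB.nonneg _) (sq_le_one_iff_abs_le_one _ |>.mpr (hc i hi))


theorem IsNonneg.apply_sub_self_le_of_forall_succ_eq (hB : B.IsNonneg) {N : ℕ}
    {x : Fin (N + 1) → E} {y : Fin N → E} {h : ℝ}
    (hstep : ∀ n, x n.succ = x n.castSucc + h • y n) (j k : Fin (N + 1)) :
    B (x k - x j) (x k - x j) ≤ h ^ 2 * (N * ∑ n, B (y n) (y n)) := by
  have hdiff : x k - x j = h • ∑ n, ((if n.castSucc < k then (1 : ℝ) else 0) -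
      if n.castSucc < j then 1 else 0) • y n := by
    rw [Fin.eq_add_smul_sum_of_forall_succ_eq hstep k, Fin.eq_add_smul_sum_of_forall_succ_eq hstep j]
    simp only [sub_smul, sum_sub_distrib, smul_sub]
    abel
  rw [hdiff, apply_smul_smul_self]
  refine mul_le_mul_of_nonneg_left ?_ (sq_nonneg h)
  simpa using hB.apply_sum_smul_self_le univ _ (fun n _ => by split_ifs <;> norm_num) y

theorem IsNonneg.apply_self_le_of_forall_succ_eq (hB : B.IsNonneg) {N : ℕ}
    {x : Fin (N + 1) → E} {y : Fin N → E} {h : ℝ}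
    (hstep : ∀ n, x n.succ = x n.castSucc + h • y n) (k : Fin (N + 1)) :
    B (x k) (x k) ≤ 2 / (N + 1) * ∑ j, B (x j) (x j) + 2 * h ^ 2 * N * ∑ n, B (y n) (y n) := by
  set D := ∑ n, B (y n) (y n)
  have hN : (0 : ℝ) < N + 1 := by positivity
  have hmean : ∑ j, (x j + (x k - x j)) = ((N : ℝ) + 1) • x k := by
    simp [sum_const, add_smul, Nat.cast_smul_eq_nsmul]
  have key : ((N : ℝ) + 1) ^ 2 * B (x k) (x k) ≤
      ((N : ℝ) + 1) * (2 * ∑ j, B (x j) (x j) + ((N : ℝ) + 1) * (2 * h ^ 2 * (N * D))) :=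
    calc ((N : ℝ) + 1) ^ 2 * B (x k) (x k)
        = B (∑ j, (x j + (x k - x j))) (∑ j, (x j + (x k - x j))) := by
          rw [hmean, apply_smul_smul_self]
      _ ≤ ((N : ℝ) + 1) * ∑ j, B (x j + (x k - x j)) (x j + (x k - x j)) := by
          convert hB.apply_sum_self_le univ fun j => x j + (x k - x j) using 2
          simp
      _ ≤ ((N : ℝ) + 1) * ∑ j : Fin (N + 1), (2 * B (x j) (x j) + 2 * (h ^ 2 * (N * D))) := by
          gcongr with j
          exact (hB.apply_add_self_le _ _).trans (by
            gcongr; exact hB.apply_sub_self_le_of_forall_succ_eq hstep j k)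
      _ = ((N : ℝ) + 1) * (2 * ∑ j, B (x j) (x j) + ((N : ℝ) + 1) * (2 * h ^ 2 * (N * D))) := by
          simp only [sum_add_distrib, ← mul_sum, sum_const, card_univ, Fintype.card_fin,
            nsmul_eq_mul]
          push_cast
          ring
  rw [div_mul_eq_mul_div, ← sub_le_iff_le_add, le_div_iff₀ hN]
  nlinarith

end LinearMap.BilinForm

section

variable {E : Type*} [NormedAddCommGroup E] [InnerProductSpace ℝ E] {ι : Type*}

noncomputable def partialExpansion (φ : ι → E) (s : Finset ι) : E →ₗ[ℝ] E :=
  ∑ i ∈ s, ((innerₗ E).flip (φ i)).smulRight (φ i)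

@[simp]
theorem partialExpansion_apply (φ : ι → E) (s : Finset ι) (v : E) :
    partialExpansion φ s v = ∑ i ∈ s, ⟪v, φ i⟫_ℝ • φ i := by
  simp [partialExpansion, real_inner_comm]

theorem Orthonormal.sum_inner_smul_eq_of_mem_span_s3 [Fintype ι] {φ : ι → E} (hφ : Orthonormal ℝ φ)
    {y : E} (hy : y ∈ Submodule.span ℝ (Set.range φ)) : ∑ i, ⟪y, φ i⟫_ℝ • φ i = y := by
  obtain ⟨c, rfl⟩ := (Submodule.mem_span_range_iff_exists_fun ℝ).mp hy
  simp only [hφ.inner_left_fintype, conj_trivial]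

theorem Orthonormal.sub_partialExpansion_eq_compl [Fintype ι] [DecidableEq ι] {φ : ι → E}
    (hφ : Orthonormal ℝ φ) {y : E} (hy : y ∈ Submodule.span ℝ (Set.range φ)) (s : Finset ι) :
    y - partialExpansion φ s y = partialExpansion φ sᶜ y := by
  rw [sub_eq_iff_eq_add', partialExpansion_apply, partialExpansion_apply, sum_add_sum_compl,
    hφ.sum_inner_smul_eq_of_mem_span_s3 hy]

theorem LinearMap.BilinForm.sum_apply_partialExpansion_self [DecidableEq ι]
    (B : LinearMap.BilinForm ℝ E) {κ : Type*} [Fintype κ] (v : κ → E) (φ : ι → E) (μ : ι → ℝ)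
    (hcorr : ∀ i j, ∑ a, ⟪v a, φ i⟫_ℝ * ⟪v a, φ j⟫_ℝ = if i = j then μ i else 0)
    (s : Finset ι) :
    ∑ a, B (partialExpansion φ s (v a)) (partialExpansion φ s (v a)) =
      ∑ i ∈ s, μ i * B (φ i) (φ i) := by
  simp only [partialExpansion_apply, map_sum, map_smul, LinearMap.sum_apply, LinearMap.smul_apply,
    smul_eq_mul, mul_sum]
  rw [sum_comm]
  refine sum_congr rfl fun i hi => ?_
  rw [sum_comm]
  simp only [← mul_assoc, ← sum_mul, hcorr, ite_mul, zero_mul, sum_ite_eq, if_pos hi]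

theorem LinearMap.BilinForm.sum_add_sum_apply_partialExpansion_self [DecidableEq ι]
    (B : LinearMap.BilinForm ℝ E) {κ₁ κ₂ : Type*} [Fintype κ₁] [Fintype κ₂] (v : κ₁ → E)
    (w : κ₂ → E) (φ : ι → E) (μ : ι → ℝ) {c : ℝ} (hc : c ≠ 0)
    (hcorr : ∀ i j, 1 / c * (∑ a, ⟪v a, φ i⟫_ℝ * ⟪v a, φ j⟫_ℝ + ∑ b, ⟪w b, φ i⟫_ℝ * ⟪w b, φ j⟫_ℝ) =
      if i = j then μ i else 0)
    (s : Finset ι) :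
    ∑ a, B (partialExpansion φ s (v a)) (partialExpansion φ s (v a)) +
        ∑ b, B (partialExpansion φ s (w b)) (partialExpansion φ s (w b)) =
      c * ∑ i ∈ s, μ i * B (φ i) (φ i) := by
  have hcorr' : ∀ i j, ∑ a, ⟪Sum.elim v w a, φ i⟫_ℝ * ⟪Sum.elim v w a, φ j⟫_ℝ =
      if i = j then c * μ i else 0 := by
    intro i j
    have h := hcorr i j
    rw [one_div, inv_mul_eq_iff_eq_mul₀ hc] at h
    simp only [Fintype.sum_sum_type, Sum.elim_inl, Sum.elim_inr, h, mul_ite, mul_zero]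
  have h := B.sum_apply_partialExpansion_self (Sum.elim v w) φ _ hcorr' s
  simp only [Fintype.sum_sum_type, Sum.elim_inl, Sum.elim_inr] at h
  simp only [h, mul_sum, mul_assoc]

end

theorem two_div_mul_add_two_mul_sq_mul_le {N : ℕ} (hN : 1 ≤ N) (T : ℝ) {a b : ℝ} (ha : 0 ≤ a)
    (hb : 0 ≤ b) :
    2 / ((N : ℝ) + 1) * a + 2 * (T / N) ^ 2 * N * b ≤ 6 * max 1 (T ^ 2) / (2 * N + 1) * (a + b) := by
  have hN' : (1 : ℝ) ≤ N := by exact_mod_cast hN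
  have hM : 2 / ((N : ℝ) + 1) ≤ 6 * max 1 (T ^ 2) / (2 * N + 1) := by
    rw [div_le_div_iff₀ (by positivity) (by positivity)]
    nlinarith [le_max_left 1 (T ^ 2)]
  have hT : 2 * (T / N) ^ 2 * N ≤ 6 * max 1 (T ^ 2) / (2 * N + 1) := by
    rw [div_pow, le_div_iff₀ (by positivity)]
    field_simp
    nlinarith [le_max_right 1 (T ^ 2), sq_nonneg T]
  rw [mul_add]
  gcongr

theorem dq_pod_uniform_bound_W_general
    {E : Type*} [NormedAddCommGroup E] [InnerProductSpace ℝ E]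
    (T : ℝ) (hT : 0 < T) (N : ℕ) (hN : 1 ≤ N)
    (Δt : ℝ) (hΔt : Δt = T / N)
    (u : Fin (N + 1) → E) (du : Fin N → E)
    (hdu : ∀ n : Fin N, du n = (Δt)⁻¹ • (u n.succ - u n.castSucc))
    (d : ℕ) (φ : Fin d → E) (lam : Fin d → ℝ)
    (hortho : Orthonormal ℝ φ)
    (hspan_u : ∀ k, u k ∈ Submodule.span ℝ (Set.range φ))
    (hcorr : ∀ i j : Fin d,
      (1 / (2 * (N : ℝ) + 1)) *
        ((∑ k : Fin (N + 1), ⟪u k, φ i⟫_ℝ * ⟪u k, φ j⟫_ℝ) +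
          ∑ n : Fin N, ⟪du n, φ i⟫_ℝ * ⟪du n, φ j⟫_ℝ)
        = if i = j then lam i else 0)
    (innerW : E → E → ℝ)
    (hW_symm : ∀ u v, innerW u v = innerW v u)
    (hW_add : ∀ u v w, innerW (u + v) w = innerW u w + innerW v w)
    (hW_smul : ∀ (c : ℝ) (u v : E), innerW (c • u) v = c * innerW u v)
    (hW_pos : ∀ u : E, u ≠ 0 → 0 < innerW u u)
    (r : ℕ)
    (P : E → E)
    (hP : ∀ v, P v = ∑ i ∈ Finset.univ.filter (fun i : Fin d => (i : ℕ) < r),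
      ⟪v, φ i⟫_ℝ • φ i) :
    ∀ k : Fin (N + 1),
      innerW (u k - P (u k)) (u k - P (u k)) ≤ 6 * max 1 (T ^ 2) *
        ∑ i ∈ Finset.univ.filter (fun i : Fin d => r ≤ (i : ℕ)),
          lam i * innerW (φ i) (φ i) := by
  intro k
  set W := LinearMap.BilinForm.mkOfSymm innerW hW_symm hW_add hW_smul
  have hW : W.IsNonneg := LinearMap.BilinForm.isNonneg_mkOfSymm _ _ _ _ hW_pos
  set tail := univ.filter fun i : Fin d => r ≤ (i : ℕ)
  set e := fun j => partialExpansion φ tail (u j)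
  set δ := fun n => partialExpansion φ tail (du n)
  have hstep : ∀ n, e n.succ = e n.castSucc + Δt • δ n := by
    have hΔt0 : Δt ≠ 0 := hΔt ▸ div_ne_zero hT.ne' (Nat.cast_ne_zero.mpr (by omega))
    intro n
    simp only [e, δ, hdu]
    rw [map_smul, smul_smul, mul_inv_cancel₀ hΔt0, one_smul, map_sub, add_sub_cancel]
  have henergy : ∑ j, W (e j) (e j) + ∑ n, W (δ n) (δ n) =
      (2 * N + 1) * ∑ i ∈ tail, lam i * innerW (φ i) (φ i) :=
    W.sum_add_sum_apply_partialExpansion_self u du φ lam (by positivity) hcorr tail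
  calc innerW (u k - P (u k)) (u k - P (u k)) = W (e k) (e k) := by
        rw [hP, ← partialExpansion_apply, hortho.sub_partialExpansion_eq_compl (hspan_u k),
          compl_filter]
        simp only [not_lt, tail, e, W, LinearMap.BilinForm.mkOfSymm_apply]
    _ ≤ 2 / ((N : ℝ) + 1) * ∑ j, W (e j) (e j) + 2 * Δt ^ 2 * N * ∑ n, W (δ n) (δ n) :=
      hW.apply_self_le_of_forall_succ_eq hstep k
    _ ≤ 6 * max 1 (T ^ 2) / (2 * N + 1) * (∑ j, W (e j) (e j) + ∑ n, W (δ n) (δ n)) :=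
      hΔt ▸ two_div_mul_add_two_mul_sq_mul_le hN T (sum_nonneg fun j _ => hW.nonneg (e j))
        (sum_nonneg fun n _ => hW.nonneg (δ n))
    _ = 6 * max 1 (T ^ 2) * ∑ i ∈ tail, lam i * innerW (φ i) (φ i) := by
      rw [henergy]
      field_simp

/-- Bound (b) of Theorem 2.2: uniform-in-time DQ POD projection error bound in a
second inner-product norm `W`,
`max_k ‖u^k − P_r u^k‖_W² ≤ 6 max{1, T²} Σ_{i>r} λ_i^DQ ‖φ_i‖_W²`. -/
theorem dq_pod_uniform_bound_W
    {E : Type*} [NormedAddCommGroup E] [InnerProductSpace ℝ E]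
    (T : ℝ) (hT : 0 < T) (N : ℕ) (hN : 1 ≤ N)
    (Δt : ℝ) (hΔt : Δt = T / N)
    (u : Fin (N + 1) → E) (du : Fin N → E)
    (hdu : ∀ n : Fin N, du n = (Δt)⁻¹ • (u n.succ - u n.castSucc))
    (d : ℕ) (φ : Fin d → E) (lam : Fin d → ℝ)
    (hortho : Orthonormal ℝ φ)
    (hspan_u : ∀ k, u k ∈ Submodule.span ℝ (Set.range φ))
    (hspan_du : ∀ n, du n ∈ Submodule.span ℝ (Set.range φ))
    (hlam_nonneg : ∀ i, 0 ≤ lam i)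
    (hcorr : ∀ i j : Fin d,
      (1 / (2 * (N : ℝ) + 1)) *
        ((∑ k : Fin (N + 1), ⟪u k, φ i⟫_ℝ * ⟪u k, φ j⟫_ℝ) +
          ∑ n : Fin N, ⟪du n, φ i⟫_ℝ * ⟪du n, φ j⟫_ℝ)
        = if i = j then lam i else 0)
    (innerW : E → E → ℝ)
    (hW_symm : ∀ u v, innerW u v = innerW v u)
    (hW_add : ∀ u v w, innerW (u + v) w = innerW u w + innerW v w)
    (hW_smul : ∀ (c : ℝ) (u v : E), innerW (c • u) v = c * innerW u v)
    (hW_pos : ∀ u : E, u ≠ 0 → 0 < innerW u u)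
    (r : ℕ) (hr : r ≤ d)
    (P : E → E)
    (hP : ∀ v, P v = ∑ i ∈ Finset.univ.filter (fun i : Fin d => (i : ℕ) < r),
      ⟪v, φ i⟫_ℝ • φ i) :
    ∀ k : Fin (N + 1),
      innerW (u k - P (u k)) (u k - P (u k)) ≤ 6 * max 1 (T ^ 2) *
        ∑ i ∈ Finset.univ.filter (fun i : Fin d => r ≤ (i : ℕ)),
          lam i * innerW (φ i) (φ i) :=
  dq_pod_uniform_bound_W_general T hT N hN Δt hΔt u du hdu d φ lam hortho hspan_u hcorr innerW
    hW_symm hW_add hW_smul hW_pos r P hP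
end

section
/- Let E be a real inner product space with inner product ⟨·,·⟩_H. Fix T > 0, an integer N ≥ 1, set Δt = T/N, and let u^0, u^1, …, u^N ∈ E with difference quotients ∂u^n := (u^n − u^{n−1})/Δt for 1 ≤ n ≤ N; let the DQ snapshot family be the M = 2N+1 vectors {u^n}_{n=0}^N ∪ {∂u^n}_{n=1}^N. Assume φ_1, …, φ_d ∈ E are POD modes for this family: the φ_i are ⟨·,·⟩_H-orthonormal, every vector of the family lies in span{φ_1, …, φ_d}, and there exist nonnegative reals λ_1^DQ, …, λ_d^DQ with (1/(2N+1)) Σ over the family of ⟨y, φ_i⟩_H ⟨y, φ_j⟩_H = λ_i^DQ δ_{ij}. Let ⟨·,·⟩_W be a second inner product on E with norm ‖·‖_W, fix 0 ≤ r ≤ d, and let R_r : E → E be any linear projection onto X^r = span{φ_1, …, φ_r} (R_r linear, range contained in X^r, and R_r v = v for all v ∈ X^r). Then max_{0 ≤ k ≤ N} ‖u^k − R_r u^k‖_W² ≤ C Σ_{i=r+1}^d λ_i^DQ ‖φ_i − R_r φ_i‖_W², where C = 6 max{1, T²}. -/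
open scoped InnerProductSpace
open Finset

section Waux
variable {E : Type*} [AddCommGroup E] [Module ℝ E]
variable (W : E → E → ℝ)

lemma W_zero_left (hsmul : ∀ (c : ℝ) (u v : E), W (c • u) v = c * W u v) (v : E) :
    W 0 v = 0 := by
  have := hsmul 0 0 v; simpa using this

lemma W_neg_left (hsmul : ∀ (c : ℝ) (u v : E), W (c • u) v = c * W u v) (u v : E) :
    W (-u) v = - W u v := by
  have := hsmul (-1) u v; simpa using this

lemma W_sub_left (hadd : ∀ u v w, W (u + v) w = W u w + W v w)
    (hsmul : ∀ (c : ℝ) (u v : E), W (c • u) v = c * W u v) (u v w : E) :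
    W (u - v) w = W u w - W v w := by
  rw [sub_eq_add_neg, hadd, W_neg_left W hsmul, sub_eq_add_neg]

lemma W_sum_left (hadd : ∀ u v w, W (u + v) w = W u w + W v w)
    (hsmul : ∀ (c : ℝ) (u v : E), W (c • u) v = c * W u v)
    {ι : Type*} (s : Finset ι) (f : ι → E) (v : E) :
    W (∑ i ∈ s, f i) v = ∑ i ∈ s, W (f i) v := by
  induction s using Finset.cons_induction with
  | empty => simpa using W_zero_left W hsmul v
  | cons a s ha ih => rw [Finset.sum_cons, hadd, ih, Finset.sum_cons]

lemma W_self_nonneg (hsmul : ∀ (c : ℝ) (u v : E), W (c • u) v = c * W u v)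
    (hpos : ∀ u : E, u ≠ 0 → 0 < W u u) (v : E) : 0 ≤ W v v := by
  rcases eq_or_ne v 0 with rfl | h
  · rw [W_zero_left W hsmul]
  · exact (hpos v h).le

lemma W_inner_le (hsymm : ∀ u v, W u v = W v u)
    (hadd : ∀ u v w, W (u + v) w = W u w + W v w)
    (hsmul : ∀ (c : ℝ) (u v : E), W (c • u) v = c * W u v)
    (hpos : ∀ u : E, u ≠ 0 → 0 < W u u) (a b : E) :
    2 * W a b ≤ W a a + W b b := by
  have h := W_self_nonneg W hsmul hpos (a - b)
  have e1 : W (a - b) (a - b) = W a (a - b) - W b (a - b) :=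
    W_sub_left W hadd hsmul a b (a - b)
  have e2 : W a (a - b) = W a a - W a b := by
    rw [hsymm a (a - b), W_sub_left W hadd hsmul, hsymm a a, hsymm b a]
  have e3 : W b (a - b) = W a b - W b b := by
    rw [hsymm b (a - b), W_sub_left W hadd hsmul, hsymm b b]
  linarith [h, e1, e2, e3, hsymm a b]

lemma W_sum_sq_le (hsymm : ∀ u v, W u v = W v u)
    (hadd : ∀ u v w, W (u + v) w = W u w + W v w)
    (hsmul : ∀ (c : ℝ) (u v : E), W (c • u) v = c * W u v)
    (hpos : ∀ u : E, u ≠ 0 → 0 < W u u)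
    {ι : Type*} (s : Finset ι) (f : ι → E) :
    W (∑ i ∈ s, f i) (∑ i ∈ s, f i) ≤ (s.card : ℝ) * ∑ i ∈ s, W (f i) (f i) := by
  have hsumr : ∀ x : E, W x (∑ i ∈ s, f i) = ∑ i ∈ s, W x (f i) := by
    intro x
    rw [hsymm, W_sum_left W hadd hsmul]
    exact Finset.sum_congr rfl fun i _ => hsymm (f i) x
  calc W (∑ i ∈ s, f i) (∑ i ∈ s, f i)
      = ∑ i ∈ s, ∑ j ∈ s, W (f i) (f j) := by
        rw [W_sum_left W hadd hsmul]
        exact Finset.sum_congr rfl fun i _ => hsumr (f i)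
    _ ≤ ∑ i ∈ s, ∑ j ∈ s, (W (f i) (f i) + W (f j) (f j)) / 2 := by
        refine Finset.sum_le_sum fun i _ => Finset.sum_le_sum fun j _ => ?_
        linarith [W_inner_le W hsymm hadd hsmul hpos (f i) (f j)]
    _ = (s.card : ℝ) * ∑ i ∈ s, W (f i) (f i) := by
        simp only [add_div, Finset.sum_add_distrib, Finset.sum_const, nsmul_eq_mul,
          ← Finset.sum_div, ← Finset.mul_sum]
        ring

end Waux

lemma span_repr' {E : Type*} [NormedAddCommGroup E] [InnerProductSpace ℝ E]
    {d : ℕ} (φ : Fin d → E) (hortho : Orthonormal ℝ φ)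
    {v : E} (hv : v ∈ Submodule.span ℝ (Set.range φ)) :
    v = ∑ i, ⟪v, φ i⟫_ℝ • φ i := by
  induction hv using Submodule.span_induction with
  | mem x hx =>
      obtain ⟨j, rfl⟩ := hx
      simp [orthonormal_iff_ite.mp hortho, ite_smul]
  | zero => simp
  | add x y hx hy ihx ihy =>
      simp only [inner_add_left, add_smul, Finset.sum_add_distrib]
      rw [← ihx, ← ihy]
  | smul c x hx ih =>
      simp only [real_inner_smul_left, mul_smul, ← Finset.smul_sum]
      rw [← ih]

lemma W_nW_smul {E : Type*} [AddCommGroup E] [Module ℝ E]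
    (W : E → E → ℝ) (hsymm : ∀ u v, W u v = W v u)
    (hsmul : ∀ (c : ℝ) (u v : E), W (c • u) v = c * W u v)
    (c : ℝ) (x : E) : W (c • x) (c • x) = c ^ 2 * W x x := by
  rw [hsmul, hsymm, hsmul, hsymm]
  ring

lemma W_nW_neg {E : Type*} [AddCommGroup E] [Module ℝ E]
    (W : E → E → ℝ) (hsymm : ∀ u v, W u v = W v u)
    (hsmul : ∀ (c : ℝ) (u v : E), W (c • u) v = c * W u v)
    (x : E) : W (-x) (-x) = W x x := by
  have := W_nW_smul W hsymm hsmul (-1) x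
  simpa using this

lemma W_add_sq_le {E : Type*} [AddCommGroup E] [Module ℝ E]
    (W : E → E → ℝ) (hsymm : ∀ u v, W u v = W v u)
    (hadd : ∀ u v w, W (u + v) w = W u w + W v w)
    (hsmul : ∀ (c : ℝ) (u v : E), W (c • u) v = c * W u v)
    (hpos : ∀ u : E, u ≠ 0 → 0 < W u u) (a b : E) :
    W (a + b) (a + b) ≤ 2 * W a a + 2 * W b b := by
  have h1 : W (a + b) (a + b) = W a a + W b a + (W a b + W b b) := by
    rw [hadd, hsymm a (a+b), hadd, hsymm b (a+b), hadd, hsymm a a, hsymm b b,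
      hsymm b a, hsymm a b]
  have h2 := W_inner_le W hsymm hadd hsmul hpos a b
  have h3 : W b a = W a b := hsymm b a
  linarith


set_option maxHeartbeats 1600000

/-- Bound (c) of Theorem 2.2: uniform-in-time DQ POD projection error bound for
an arbitrary linear projection `R` onto the POD space, in a second
inner-product norm `W`:
`max_k ‖u^k − R u^k‖_W² ≤ 6 max{1, T²} Σ_{i>r} λ_i^DQ ‖φ_i − R φ_i‖_W²`. -/
theorem dq_pod_uniform_bound_general_projection
    {E : Type*} [NormedAddCommGroup E] [InnerProductSpace ℝ E]
    (T : ℝ) (hT : 0 < T) (N : ℕ) (hN : 1 ≤ N)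
    (Δt : ℝ) (hΔt : Δt = T / N)
    (u : Fin (N + 1) → E) (du : Fin N → E)
    (hdu : ∀ n : Fin N, du n = (Δt)⁻¹ • (u n.succ - u n.castSucc))
    (d : ℕ) (φ : Fin d → E) (lam : Fin d → ℝ)
    (hortho : Orthonormal ℝ φ)
    (hspan_u : ∀ k, u k ∈ Submodule.span ℝ (Set.range φ))
    (hspan_du : ∀ n, du n ∈ Submodule.span ℝ (Set.range φ))
    (hlam_nonneg : ∀ i, 0 ≤ lam i)
    (hcorr : ∀ i j : Fin d,
      (1 / (2 * (N : ℝ) + 1)) *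
        ((∑ k : Fin (N + 1), ⟪u k, φ i⟫_ℝ * ⟪u k, φ j⟫_ℝ) +
          ∑ n : Fin N, ⟪du n, φ i⟫_ℝ * ⟪du n, φ j⟫_ℝ)
        = if i = j then lam i else 0)
    (innerW : E → E → ℝ)
    (hW_symm : ∀ u v, innerW u v = innerW v u)
    (hW_add : ∀ u v w, innerW (u + v) w = innerW u w + innerW v w)
    (hW_smul : ∀ (c : ℝ) (u v : E), innerW (c • u) v = c * innerW u v)
    (hW_pos : ∀ u : E, u ≠ 0 → 0 < innerW u u)
    (r : ℕ) (hr : r ≤ d)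
    (R : E →ₗ[ℝ] E)
    (hR_range : ∀ v, R v ∈ Submodule.span ℝ (φ '' {i : Fin d | (i : ℕ) < r}))
    (hR_proj : ∀ v ∈ Submodule.span ℝ (φ '' {i : Fin d | (i : ℕ) < r}), R v = v) :
    ∀ k : Fin (N + 1),
      innerW (u k - R (u k)) (u k - R (u k)) ≤ 6 * max 1 (T ^ 2) *
        ∑ i ∈ Finset.univ.filter (fun i : Fin d => r ≤ (i : ℕ)),
          lam i * innerW (φ i - R (φ i)) (φ i - R (φ i)) := by
  intro k
  have hNR : (1:ℝ) ≤ (N:ℝ) := by exact_mod_cast hN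
  have hNpos : (0:ℝ) < (N:ℝ) := by linarith
  have hΔt_pos : 0 < Δt := by rw [hΔt]; positivity
  set ψ : Fin d → E := fun i => φ i - R (φ i) with hψ
  set nW : E → ℝ := fun v => innerW v v with hnW
  set errL : E →ₗ[ℝ] E := LinearMap.id - R with herrL
  have herr_apply : ∀ v : E, errL v = v - R v := fun v => rfl
  have hnW_nonneg : ∀ v, 0 ≤ nW v := W_self_nonneg innerW hW_smul hW_pos
  -- representation of the error
  have hrep : ∀ v ∈ Submodule.span ℝ (Set.range φ),
      errL v = ∑ i, ⟪v, φ i⟫_ℝ • ψ i := by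
    intro v hv
    have h1 := span_repr' φ hortho hv
    conv_lhs => rw [h1]
    rw [map_sum]
    refine Finset.sum_congr rfl fun i _ => ?_
    rw [map_smul, herr_apply]
  -- quadratic expansion
  have hquad : ∀ v ∈ Submodule.span ℝ (Set.range φ),
      nW (errL v) = ∑ i, ∑ j, ⟪v, φ i⟫_ℝ * ⟪v, φ j⟫_ℝ * innerW (ψ i) (ψ j) := by
    intro v hv
    rw [hnW]
    simp only [hrep v hv]
    rw [W_sum_left innerW hW_add hW_smul]
    refine Finset.sum_congr rfl fun i _ => ?_
    rw [hW_smul, hW_symm, W_sum_left innerW hW_add hW_smul, Finset.mul_sum]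
    refine Finset.sum_congr rfl fun j _ => ?_
    rw [hW_smul, hW_symm (ψ j) (ψ i)]
    ring
  set S : ℝ := ∑ i, lam i * nW (ψ i) with hS
  have hS_nonneg : 0 ≤ S :=
    Finset.sum_nonneg fun i _ => mul_nonneg (hlam_nonneg i) (hnW_nonneg (ψ i))
  -- the key correlation identity
  have hM0 : (2*(N:ℝ)+1) ≠ 0 := by positivity
  have hcorr' : ∀ i j : Fin d,
      ((∑ m : Fin (N + 1), ⟪u m, φ i⟫_ℝ * ⟪u m, φ j⟫_ℝ) +
        ∑ n : Fin N, ⟪du n, φ i⟫_ℝ * ⟪du n, φ j⟫_ℝ)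
      = (2*(N:ℝ)+1) * (if i = j then lam i else 0) := by
    intro i j
    have h := hcorr i j
    rw [one_div, inv_mul_eq_iff_eq_mul₀ hM0] at h
    exact h
  have hkey : (∑ m : Fin (N+1), nW (errL (u m))) + (∑ n : Fin N, nW (errL (du n)))
      = (2*(N:ℝ)+1) * S := by
    have e1 : (∑ m : Fin (N+1), nW (errL (u m)))
        = ∑ i, ∑ j, (∑ m : Fin (N+1), ⟪u m, φ i⟫_ℝ * ⟪u m, φ j⟫_ℝ) * innerW (ψ i) (ψ j) := by
      rw [Finset.sum_congr rfl fun m _ => hquad (u m) (hspan_u m)]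
      rw [Finset.sum_comm]
      refine Finset.sum_congr rfl fun i _ => ?_
      rw [Finset.sum_comm]
      refine Finset.sum_congr rfl fun j _ => ?_
      rw [Finset.sum_mul]
    have e2 : (∑ n : Fin N, nW (errL (du n)))
        = ∑ i, ∑ j, (∑ n : Fin N, ⟪du n, φ i⟫_ℝ * ⟪du n, φ j⟫_ℝ) * innerW (ψ i) (ψ j) := by
      rw [Finset.sum_congr rfl fun n _ => hquad (du n) (hspan_du n)]
      rw [Finset.sum_comm]
      refine Finset.sum_congr rfl fun i _ => ?_
      rw [Finset.sum_comm]
      refine Finset.sum_congr rfl fun j _ => ?_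
      rw [Finset.sum_mul]
    rw [e1, e2, ← Finset.sum_add_distrib]
    have e3 : ∀ i : Fin d,
        ((∑ j, (∑ m : Fin (N+1), ⟪u m, φ i⟫_ℝ * ⟪u m, φ j⟫_ℝ) * innerW (ψ i) (ψ j)) +
         ∑ j, (∑ n : Fin N, ⟪du n, φ i⟫_ℝ * ⟪du n, φ j⟫_ℝ) * innerW (ψ i) (ψ j))
        = (2*(N:ℝ)+1) * (lam i * nW (ψ i)) := by
      intro i
      rw [← Finset.sum_add_distrib]
      have e4 : ∀ j : Fin d,
          ((∑ m : Fin (N+1), ⟪u m, φ i⟫_ℝ * ⟪u m, φ j⟫_ℝ) * innerW (ψ i) (ψ j) +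
           (∑ n : Fin N, ⟪du n, φ i⟫_ℝ * ⟪du n, φ j⟫_ℝ) * innerW (ψ i) (ψ j))
          = if i = j then (2*(N:ℝ)+1) * (lam i * innerW (ψ i) (ψ j)) else 0 := by
        intro j
        rw [← add_mul, hcorr' i j]
        split_ifs with h
        · ring
        · ring
      rw [Finset.sum_congr rfl fun j _ => e4 j, Finset.sum_ite_eq Finset.univ i
        (fun j => (2*(N:ℝ)+1) * (lam i * innerW (ψ i) (ψ j)))]
      simp [hnW]
    rw [Finset.sum_congr rfl fun i _ => e3 i, ← Finset.mul_sum, hS]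
  -- discrete trajectory on ℕ
  set F : ℕ → E := fun j => if h : j ≤ N then errL (u ⟨j, Nat.lt_succ_of_le h⟩) else 0 with hF
  set G : ℕ → E := fun n => if h : n < N then errL (du ⟨n, h⟩) else 0 with hG
  set A : ℝ := ∑ m : Fin (N+1), nW (errL (u m)) with hA
  set B : ℝ := ∑ n : Fin N, nW (errL (du n)) with hB
  have hA_nonneg : 0 ≤ A := Finset.sum_nonneg fun _ _ => hnW_nonneg _
  have hB_nonneg : 0 ≤ B := Finset.sum_nonneg fun _ _ => hnW_nonneg _
  have hFm : ∀ i : Fin (N+1), F (i : ℕ) = errL (u i) := by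
    intro i
    simp only [hF, dif_pos (Nat.lt_succ_iff.mp i.isLt), Fin.eta]
  have hGn : ∀ i : Fin N, G (i : ℕ) = errL (du i) := by
    intro i
    simp only [hG, dif_pos i.isLt]
  have hA' : ∑ m ∈ Finset.range (N+1), nW (F m) = A := by
    rw [hA, ← Fin.sum_univ_eq_sum_range (fun m => nW (F m)) (N+1)]
    exact Finset.sum_congr rfl fun i _ => by rw [hFm i]
  have hB' : ∑ n ∈ Finset.range N, nW (G n) = B := by
    rw [hB, ← Fin.sum_univ_eq_sum_range (fun n => nW (G n)) N]
    exact Finset.sum_congr rfl fun i _ => by rw [hGn i]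
  have hFG : ∀ n, n < N → F (n+1) - F n = Δt • G n := by
    intro n hn
    have e1 : F (n+1) = errL (u (⟨n, hn⟩ : Fin N).succ) := by
      simp only [hF, dif_pos (Nat.succ_le_of_lt hn)]
      rfl
    have e2 : F n = errL (u (⟨n, hn⟩ : Fin N).castSucc) := by
      simp only [hF, dif_pos (Nat.le_of_lt hn)]
      rfl
    rw [e1, e2]
    simp only [hG, dif_pos hn]
    rw [← map_sub, ← map_smul]
    congr 1
    rw [hdu ⟨n, hn⟩, smul_smul, mul_inv_cancel₀ (ne_of_gt hΔt_pos), one_smul]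
  have htel : ∀ a b : ℕ, a ≤ b → b ≤ N → F b - F a = Δt • ∑ n ∈ Finset.Ico a b, G n := by
    intro a b hab hbN
    have h1 : ∑ n ∈ Finset.Ico a b, (F (n+1) - F n) = F b - F a := by
      rw [Finset.sum_Ico_eq_sub _ hab, Finset.sum_range_sub, Finset.sum_range_sub]
      abel
    rw [← h1, Finset.smul_sum]
    refine Finset.sum_congr rfl fun n hn => ?_
    exact hFG n (lt_of_lt_of_le (Finset.mem_Ico.mp hn).2 hbN)
  have hdiff : ∀ a b : ℕ, a ≤ N → b ≤ N → nW (F b - F a) ≤ Δt^2 * (N:ℝ) * B := by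
    have main : ∀ a b : ℕ, a ≤ b → b ≤ N → nW (F b - F a) ≤ Δt^2 * (N:ℝ) * B := by
      intro a b hab hbN
      rw [htel a b hab hbN]
      simp only [hnW]
      rw [W_nW_smul innerW hW_symm hW_smul]
      have h2 := W_sum_sq_le innerW hW_symm hW_add hW_smul hW_pos (Finset.Ico a b) G
      have hcard : (((Finset.Ico a b).card : ℕ) : ℝ) ≤ (N:ℝ) := by
        have : (Finset.Ico a b).card ≤ N := by rw [Nat.card_Ico]; omega
        exact_mod_cast this
      have hsub : ∑ n ∈ Finset.Ico a b, innerW (G n) (G n) ≤ B := by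
        rw [← hB']
        refine Finset.sum_le_sum_of_subset_of_nonneg ?_ (fun i _ _ => hnW_nonneg (G i))
        intro x hx
        rw [Finset.mem_range]
        exact lt_of_lt_of_le (Finset.mem_Ico.mp hx).2 hbN
      have hsum_nonneg : (0:ℝ) ≤ ∑ n ∈ Finset.Ico a b, innerW (G n) (G n) :=
        Finset.sum_nonneg fun i _ => hnW_nonneg (G i)
      have h3 : innerW (∑ n ∈ Finset.Ico a b, G n) (∑ n ∈ Finset.Ico a b, G n)
          ≤ (N:ℝ) * B :=
        le_trans h2 (mul_le_mul hcard hsub hsum_nonneg hNpos.le)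
      calc Δt^2 * innerW (∑ n ∈ Finset.Ico a b, G n) (∑ n ∈ Finset.Ico a b, G n)
          ≤ Δt^2 * ((N:ℝ) * B) := mul_le_mul_of_nonneg_left h3 (sq_nonneg Δt)
        _ = Δt^2 * (N:ℝ) * B := by ring
    intro a b ha hb
    rcases le_total a b with h | h
    · exact main a b h hb
    · have e : F b - F a = -(F a - F b) := by abel
      rw [e]
      simp only [hnW]
      rw [W_nW_neg innerW hW_symm hW_smul]
      exact main b a h ha
  have hkN : (k:ℕ) ≤ N := Nat.lt_succ_iff.mp k.isLt
  have hstep : ∀ m, m ≤ N → nW (F (k:ℕ)) ≤ 2 * nW (F m) + 2 * (Δt^2 * (N:ℝ) * B) := by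
    intro m hm
    have e : F m + (F (k:ℕ) - F m) = F (k:ℕ) := by abel
    have h1 := W_add_sq_le innerW hW_symm hW_add hW_smul hW_pos (F m) (F (k:ℕ) - F m)
    rw [e] at h1
    have h2 := hdiff m (k:ℕ) hm hkN
    simp only [hnW] at h2 ⊢
    linarith
  have hsum : ((N:ℝ)+1) * nW (F (k:ℕ))
      ≤ 2 * A + ((N:ℝ)+1) * (2 * (Δt^2 * (N:ℝ) * B)) := by
    have h := Finset.sum_le_sum (s := Finset.range (N+1))
      (f := fun _ => nW (F (k:ℕ)))
      (g := fun m => 2 * nW (F m) + 2 * (Δt^2 * (N:ℝ) * B))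
      (fun m hm => hstep m (Nat.lt_succ_iff.mp (Finset.mem_range.mp hm)))
    have l1 : ∑ _m ∈ Finset.range (N+1), nW (F (k:ℕ)) = ((N:ℝ)+1) * nW (F (k:ℕ)) := by
      rw [Finset.sum_const, Finset.card_range, nsmul_eq_mul]
      push_cast
      ring
    have l2 : ∑ m ∈ Finset.range (N+1), (2 * nW (F m) + 2 * (Δt^2 * (N:ℝ) * B))
        = 2 * A + ((N:ℝ)+1) * (2 * (Δt^2 * (N:ℝ) * B)) := by
      rw [Finset.sum_add_distrib, ← Finset.mul_sum, hA', Finset.sum_const,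
        Finset.card_range, nsmul_eq_mul]
      push_cast
      ring
    rw [l1, l2] at h
    exact h
  -- final arithmetic
  have hΔtN : Δt^2 * (N:ℝ)^2 = T^2 := by
    rw [hΔt]
    field_simp
  have hfinal : nW (F (k:ℕ)) ≤ 6 * max 1 (T^2) * S := by
    set m1 : ℝ := max 1 (T^2) with hm1
    have hm1_1 : (1:ℝ) ≤ m1 := le_max_left _ _
    have hm1_T : T^2 ≤ m1 := le_max_right _ _
    have hP : (0:ℝ) < (N:ℝ)*((N:ℝ)+1)*(2*(N:ℝ)+1) := by positivity
    refine le_of_mul_le_mul_left ?_ hP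
    have hsum2 := mul_le_mul_of_nonneg_left hsum
      (show (0:ℝ) ≤ (N:ℝ)*(2*(N:ℝ)+1) by positivity)
    have e5 : (N:ℝ)*(2*(N:ℝ)+1) * (2*A + ((N:ℝ)+1)*(2 * (Δt^2 * (N:ℝ) * B)))
        = 2*A*(N:ℝ)*(2*(N:ℝ)+1) + 2*T^2*B*(2*(N:ℝ)+1)*((N:ℝ)+1) := by
      linear_combination (2*(2*(N:ℝ)+1)*((N:ℝ)+1)*B) * hΔtN
    rw [e5] at hsum2
    have hA1 : 0 ≤ A * (6*m1*(N:ℝ)*((N:ℝ)+1) - 2*(N:ℝ)*(2*(N:ℝ)+1)) := by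
      refine mul_nonneg hA_nonneg ?_
      nlinarith [mul_nonneg (mul_nonneg (sub_nonneg.mpr hm1_1) hNpos.le)
        (show (0:ℝ) ≤ (N:ℝ)+1 by linarith)]
    have hB1 : 0 ≤ B * (6*m1*(N:ℝ)*((N:ℝ)+1) - 2*T^2*(2*(N:ℝ)+1)*((N:ℝ)+1)) := by
      refine mul_nonneg hB_nonneg ?_
      nlinarith [mul_nonneg (mul_nonneg (sub_nonneg.mpr hm1_T) hNpos.le)
          (show (0:ℝ) ≤ (N:ℝ)+1 by linarith),
        mul_nonneg (mul_nonneg (sq_nonneg T) (sub_nonneg.mpr hNR))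
          (show (0:ℝ) ≤ (N:ℝ)+1 by linarith)]
    have efinal : (N:ℝ)*((N:ℝ)+1)*(2*(N:ℝ)+1) * (6*m1*S)
        = 6*m1*(N:ℝ)*((N:ℝ)+1)*(A+B) := by
      linear_combination (6*m1*(N:ℝ)*((N:ℝ)+1)) * hkey.symm
    calc (N:ℝ)*((N:ℝ)+1)*(2*(N:ℝ)+1) * nW (F (k:ℕ))
        ≤ 2*A*(N:ℝ)*(2*(N:ℝ)+1) + 2*T^2*B*(2*(N:ℝ)+1)*((N:ℝ)+1) := by linarith
      _ ≤ 6*m1*(N:ℝ)*((N:ℝ)+1)*(A+B) := by linarith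
      _ = (N:ℝ)*((N:ℝ)+1)*(2*(N:ℝ)+1) * (6*m1*S) := efinal.symm
  -- identify the RHS sum with S
  have hfilter : ∑ i ∈ Finset.univ.filter (fun i : Fin d => r ≤ (i : ℕ)),
      lam i * innerW (ψ i) (ψ i) = S := by
    rw [hS]
    refine Finset.sum_filter_of_ne fun i _ hne => ?_
    by_contra hlt
    push_neg at hlt
    have hmem : φ i ∈ Submodule.span ℝ (φ '' {j : Fin d | (j : ℕ) < r}) :=
      Submodule.subset_span ⟨i, hlt, rfl⟩
    have hz : ψ i = 0 := by
      simp only [hψ]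
      rw [hR_proj _ hmem, sub_self]
    apply hne
    rw [hz]
    simp [W_zero_left innerW hW_smul]
  calc innerW (u k - R (u k)) (u k - R (u k)) = nW (F (k:ℕ)) := by
        simp only [hFm k, hnW, herr_apply]
    _ ≤ 6 * max 1 (T ^ 2) * S := hfinal
    _ = 6 * max 1 (T ^ 2) * ∑ i ∈ Finset.univ.filter (fun i : Fin d => r ≤ (i : ℕ)),
          lam i * innerW (ψ i) (ψ i) := by rw [hfilter]
end
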